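/- arXiv:2107.01690 — 3 statements merged into one kernel-verified Lean document; each statement's English description precedes it below -/
import Mathlib

section
/- Let A ≪ B in 𝕀ℝ, let F : 𝕀_{[A,B]} → 𝕀ℝ be a bounded interval function, and let 𝒫', 𝒫 be partitions of 𝕀_{[A,B]}. If 𝒫' is finer than 𝒫 (𝒫' ⪯ 𝒫, i.e., 𝒫 ⊆ 𝒫'), then σ(F,𝒫) ≤ σ(F,𝒫') ≤ Σ(F,𝒫') ≤ Σ(F,𝒫) in the Kulisch–Miranker order. -/
/-- `𝕀ℝ`: the set of nonempty closed bounded real intervals, identified with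
pairs `(lo, hi) ∈ ℝ × ℝ` with `lo ≤ hi`.  The subtype order inherited from the
product order on `ℝ × ℝ` is exactly the Kulisch–Miranker order, and the
inherited metric (sup metric of `ℝ × ℝ`) is exactly the Moore metric `d_M`. -/
abbrev IR : Type := {p : ℝ × ℝ // p.1 ≤ p.2}

namespace IR

/-- Left endpoint projection `π₁`. -/
def lo (A : IR) : ℝ := A.val.1

/-- Right endpoint projection `π₂`. -/
def hi (A : IR) : ℝ := A.val.2

/-- The strict Kulisch–Miranker order `A ≪ B`. -/
def sll (A B : IR) : Prop := lo A < lo B ∧ hi A < hi B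

/-- The Moore metric `d_M`. -/
noncomputable def dM (A B : IR) : ℝ := max |lo B - lo A| |hi B - hi A|

/-- `𝕀_{[A,B]} = {X ∈ 𝕀ℝ : A ≤ X ≤ B}`. -/
def box (A B : IR) : Set IR := {X : IR | A ≤ X ∧ X ≤ B}

/-- The interval `[u,v]` (with a junk degenerate value if `u > v`). -/
noncomputable def mkI (u v : ℝ) : IR := if h : u ≤ v then ⟨(u, v), h⟩ else ⟨(u, u), le_rfl⟩

/-- The point `A + t(B - A)` on the segment from `A` to `B`. -/
noncomputable def seg (A B : IR) (t : ℝ) : IR :=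
  mkI (lo A + t * (lo B - lo A)) (hi A + t * (hi B - hi A))

/-- Componentwise infimum of a set of intervals, as a pair of reals. -/
noncomputable def infS (S : Set IR) : ℝ × ℝ := (sInf (lo '' S), sInf (hi '' S))

/-- Componentwise supremum of a set of intervals, as a pair of reals. -/
noncomputable def supS (S : Set IR) : ℝ × ℝ := (sSup (lo '' S), sSup (hi '' S))

/-- A partition `A = P₀ ≪ P₁ ≪ ⋯ ≪ P_N = B` of `𝕀_{[A,B]}`, described by its
parameters `0 = t₀ < t₁ < ⋯ < t_N = 1` (so that `P_k = A + t_k (B - A)`). -/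
structure Partition where
  n : ℕ
  npos : 0 < n
  t : ℕ → ℝ
  t0 : t 0 = 0
  tn : t n = 1
  mono : ∀ i < n, t i < t (i + 1)

/-- The set of parameters of a partition. -/
def Partition.pts (P : Partition) : Set ℝ := P.t '' Set.Iic P.n

/-- The set of points `P_k = A + t_k(B-A)` of a partition of `𝕀_{[A,B]}`. -/
noncomputable def Partition.ipts (A B : IR) (P : Partition) : Set IR :=
  (fun i => seg A B (P.t i)) '' Set.Iic P.n

/-- Lower Riemann sum `σ(F, 𝒫)` (as a pair of reals; interval sums are
componentwise and `λ • [u,v] = [λu, λv]` for the scalars `λ = d_M ≥ 0`). -/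
noncomputable def lowerSum (A B : IR) (F : IR → IR) (P : Partition) : ℝ × ℝ :=
  ∑ k ∈ Finset.range P.n,
    dM (seg A B (P.t k)) (seg A B (P.t (k + 1))) •
      infS (F '' box (seg A B (P.t k)) (seg A B (P.t (k + 1))))

/-- Upper Riemann sum `Σ(F, 𝒫)`. -/
noncomputable def upperSum (A B : IR) (F : IR → IR) (P : Partition) : ℝ × ℝ :=
  ∑ k ∈ Finset.range P.n,
    dM (seg A B (P.t k)) (seg A B (P.t (k + 1))) •
      supS (F '' box (seg A B (P.t k)) (seg A B (P.t (k + 1))))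

/-- The lower integral `∫̲_A^B F(X)dX`: componentwise supremum of the lower
Riemann sums over all partitions. -/
noncomputable def lowerInt (A B : IR) (F : IR → IR) : ℝ × ℝ :=
  (sSup (Set.range fun P : Partition => (lowerSum A B F P).1),
   sSup (Set.range fun P : Partition => (lowerSum A B F P).2))

/-- The upper integral `∫̄_A^B F(X)dX`: componentwise infimum of the upper
Riemann sums over all partitions. -/
noncomputable def upperInt (A B : IR) (F : IR → IR) : ℝ × ℝ :=
  (sInf (Set.range fun P : Partition => (upperSum A B F P).1),
   sInf (Set.range fun P : Partition => (upperSum A B F P).2))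

/-- `F` is bounded on `𝕀_{[A,B]}` (order bounded, equivalently metrically
bounded). -/
def BoundedOn (F : IR → IR) (A B : IR) : Prop :=
  ∃ C D : IR, ∀ X ∈ box A B, C ≤ F X ∧ F X ≤ D

end IR

/-! Every point of the partition `𝒫` is a point of `𝒫'`, so each cell of `𝒫` is a union of
consecutive cells of `𝒫'`, and the Moore length of a cell `[A + s(B-A), A + u(B-A)]` is
`(u - s) · d_M(A,B)`. Hence the lengths of the cells of `𝒫` split additively over the cells
of `𝒫'` they contain. On a smaller cell the componentwise infimum of `F` can only grow and the
supremum only shrink, which gives the two outer inequalities; the middle one is `inf ≤ sup`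
cell by cell. -/

namespace IR

open Finset

lemma monotone_lo : Monotone lo := fun _ _ h => h.1

lemma monotone_hi : Monotone hi := fun _ _ h => h.2

section Segment

variable {A B : IR} {s u : ℝ}

lemma seg_val (ht : s ∈ Set.Icc (0 : ℝ) 1) :
    (seg A B s).val = (lo A + s * (lo B - lo A), hi A + s * (hi B - hi A)) := by
  have hA : lo A ≤ hi A := A.prop
  have hB : lo B ≤ hi B := B.prop
  rw [seg, mkI, dif_pos (by nlinarith [ht.1, ht.2])]

lemma lo_seg (hs : s ∈ Set.Icc (0 : ℝ) 1) : lo (seg A B s) = lo A + s * (lo B - lo A) := by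
  rw [lo, seg_val hs]

lemma hi_seg (hs : s ∈ Set.Icc (0 : ℝ) 1) : hi (seg A B s) = hi A + s * (hi B - hi A) := by
  rw [hi, seg_val hs]

lemma seg_zero : seg A B 0 = A :=
  Subtype.ext <| by rw [seg_val ⟨le_rfl, zero_le_one⟩]; simp [lo, hi]

lemma seg_one : seg A B 1 = B :=
  Subtype.ext <| by rw [seg_val ⟨zero_le_one, le_rfl⟩]; simp [lo, hi]

lemma seg_le_seg (hAB : A ≤ B) (hs : s ∈ Set.Icc (0 : ℝ) 1) (hu : u ∈ Set.Icc (0 : ℝ) 1)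
    (hsu : s ≤ u) : seg A B s ≤ seg A B u := by
  have hlo : lo A ≤ lo B := hAB.1
  have hhi : hi A ≤ hi B := hAB.2
  constructor
  · change lo (seg A B s) ≤ lo (seg A B u)
    rw [lo_seg hs, lo_seg hu]; nlinarith
  · change hi (seg A B s) ≤ hi (seg A B u)
    rw [hi_seg hs, hi_seg hu]; nlinarith

lemma injOn_seg (h : lo A < lo B) : Set.InjOn (seg A B) (Set.Icc 0 1) := fun s hs u hu hsu => by
  have := congrArg lo hsu
  rw [lo_seg hs, lo_seg hu] at this
  exact mul_right_cancel₀ (sub_ne_zero.2 h.ne') (add_left_cancel this)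

lemma dM_seg_seg (hAB : A ≤ B) (hs : s ∈ Set.Icc (0 : ℝ) 1) (hu : u ∈ Set.Icc (0 : ℝ) 1)
    (hsu : s ≤ u) : dM (seg A B s) (seg A B u) = (u - s) * dM A B := by
  have hlo : 0 ≤ lo B - lo A := sub_nonneg.2 hAB.1
  have hhi : 0 ≤ hi B - hi A := sub_nonneg.2 hAB.2
  have hus : 0 ≤ u - s := sub_nonneg.2 hsu
  simp only [dM, lo_seg hs, lo_seg hu, hi_seg hs, hi_seg hu, ← sub_mul, add_sub_add_left_eq_sub,
    abs_mul, abs_of_nonneg hlo, abs_of_nonneg hhi, abs_of_nonneg hus, mul_max_of_nonneg _ _ hus]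

lemma box_subset_box {C C' D D' : IR} (hC : C ≤ C') (hD : D' ≤ D) : box C' D' ⊆ box C D :=
  fun _ hX => ⟨hC.trans hX.1, hX.2.trans hD⟩

lemma box_seg_subset_box_seg (hAB : A ≤ B) {s' u' : ℝ} (hs : 0 ≤ s) (hss' : s ≤ s')
    (hs'u' : s' ≤ u') (hu'u : u' ≤ u) (hu : u ≤ 1) :
    box (seg A B s') (seg A B u') ⊆ box (seg A B s) (seg A B u) :=
  box_subset_box (seg_le_seg hAB ⟨hs, by linarith⟩ ⟨by linarith, by linarith⟩ hss')
    (seg_le_seg hAB ⟨by linarith, by linarith⟩ ⟨by linarith, hu⟩ hu'u)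

lemma box_seg_subset_box (hAB : A ≤ B) (hs : 0 ≤ s) (hsu : s ≤ u) (hu : u ≤ 1) :
    box (seg A B s) (seg A B u) ⊆ box A B := by
  simpa only [seg_zero, seg_one] using
    box_seg_subset_box_seg hAB le_rfl hs hsu hu le_rfl (B := B)

lemma box_seg_nonempty (hAB : A ≤ B) (hs : 0 ≤ s) (hsu : s ≤ u) (hu : u ≤ 1) :
    (box (seg A B s) (seg A B u)).Nonempty :=
  ⟨seg A B s, le_rfl, seg_le_seg hAB ⟨hs, by linarith⟩ ⟨by linarith, hu⟩ hsu⟩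

end Segment

section InfSup

variable {S T : Set IR}

lemma infS_le_infS (hS : BddBelow S) (hT : T.Nonempty) (hTS : T ⊆ S) : infS S ≤ infS T :=
  ⟨csInf_le_csInf (monotone_lo.map_bddBelow hS) (hT.image lo) (Set.image_mono hTS),
    csInf_le_csInf (monotone_hi.map_bddBelow hS) (hT.image hi) (Set.image_mono hTS)⟩

lemma supS_le_supS (hS : BddAbove S) (hT : T.Nonempty) (hTS : T ⊆ S) : supS T ≤ supS S :=
  ⟨csSup_le_csSup (monotone_lo.map_bddAbove hS) (hT.image lo) (Set.image_mono hTS),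
    csSup_le_csSup (monotone_hi.map_bddAbove hS) (hT.image hi) (Set.image_mono hTS)⟩

lemma infS_le_supS (hS : S.Nonempty) (hb : BddBelow S) (ha : BddAbove S) : infS S ≤ supS S :=
  ⟨csInf_le_csSup (hS.image lo) (monotone_lo.map_bddBelow hb) (monotone_lo.map_bddAbove ha),
    csInf_le_csSup (hS.image hi) (monotone_hi.map_bddBelow hb) (monotone_hi.map_bddAbove ha)⟩

end InfSup

lemma BoundedOn.bddBelow {F : IR → IR} {A B : IR} (hF : BoundedOn F A B) :
    BddBelow (F '' box A B) := by
  obtain ⟨C, _, hC⟩ := hF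
  exact ⟨C, Set.forall_mem_image.2 fun X hX => (hC X hX).1⟩

lemma BoundedOn.bddAbove {F : IR → IR} {A B : IR} (hF : BoundedOn F A B) :
    BddAbove (F '' box A B) := by
  obtain ⟨_, D, hD⟩ := hF
  exact ⟨D, Set.forall_mem_image.2 fun X hX => (hD X hX).2⟩

lemma _root_.Finset.sum_range_sum_Ico_of_monotoneOn {M : Type*} [AddCommMonoid M] (f : ℕ → M)
    {J : ℕ → ℕ} {n : ℕ} (hJ : MonotoneOn J (Set.Iic n)) :
    ∑ k ∈ range n, ∑ j ∈ Ico (J k) (J (k + 1)), f j = ∑ j ∈ Ico (J 0) (J n), f j := by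
  induction n with
  | zero => simp
  | succ n ih =>
    have hJ' : MonotoneOn J (Set.Iic n) := hJ.mono (Set.Iic_subset_Iic.2 n.le_succ)
    rw [sum_range_succ, ih hJ', sum_Ico_consecutive]
    · exact hJ' (Set.mem_Iic.2 n.zero_le) Set.self_mem_Iic n.zero_le
    · exact hJ (Set.mem_Iic.2 n.le_succ) Set.self_mem_Iic n.le_succ

namespace Partition

variable (P P' : Partition)

lemma strictMonoOn_t : StrictMonoOn P.t (Set.Iic P.n) :=
  strictMonoOn_Iic_of_lt_succ fun m hm => P.mono m hm

lemma monotoneOn_t : MonotoneOn P.t (Set.Iic P.n) := P.strictMonoOn_t.monotoneOn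

lemma t_mem_Icc {i : ℕ} (hi : i ≤ P.n) : P.t i ∈ Set.Icc (0 : ℝ) 1 := by
  constructor
  · rw [← P.t0]; exact P.monotoneOn_t (Set.mem_Iic.2 P.n.zero_le) hi i.zero_le
  · rw [← P.tn]; exact P.monotoneOn_t hi Set.self_mem_Iic hi

variable {P P'}

lemma pts_subset_of_ipts_subset {A B : IR} (h : lo A < lo B)
    (hPP' : ipts A B P ⊆ ipts A B P') : P.pts ⊆ P'.pts := by
  rintro _ ⟨i, hi, rfl⟩
  obtain ⟨j, hj, hji⟩ := hPP' ⟨i, hi, rfl⟩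
  exact ⟨j, hj, injOn_seg h (P'.t_mem_Icc hj) (P.t_mem_Icc hi) hji⟩

lemma exists_reindex_of_pts_subset (hPP' : P.pts ⊆ P'.pts) :
    ∃ J : ℕ → ℕ, MonotoneOn J (Set.Iic P.n) ∧ J 0 = 0 ∧ J P.n = P'.n ∧
      ∀ i ≤ P.n, J i ≤ P'.n ∧ P'.t (J i) = P.t i := by
  choose! J hJ using fun i (hi : i ∈ Set.Iic P.n) => hPP' ⟨i, hi, rfl⟩
  have hJ0 : J 0 = 0 :=
    P'.strictMonoOn_t.injOn (hJ 0 (Nat.zero_le _)).1 (Set.mem_Iic.2 (Nat.zero_le _)) <| by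
      rw [(hJ 0 (Nat.zero_le _)).2, P.t0, P'.t0]
  have hJn : J P.n = P'.n :=
    P'.strictMonoOn_t.injOn (hJ P.n Set.self_mem_Iic).1 Set.self_mem_Iic <| by
      rw [(hJ P.n Set.self_mem_Iic).2, P.tn, P'.tn]
  refine ⟨J, fun i hi i' hi' hii' => ?_, hJ0, hJn, fun i hi => hJ i hi⟩
  rw [← P'.strictMonoOn_t.le_iff_le (hJ i hi).1 (hJ i' hi').1, (hJ i hi).2, (hJ i' hi').2]
  exact P.monotoneOn_t hi hi' hii'

section RiemannSum

variable {M : Type*} [AddCommMonoid M] [Module ℝ M]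

def riemannSum (P : Partition) (v : ℝ → ℝ → M) : M :=
  ∑ k ∈ range P.n, (P.t (k + 1) - P.t k) • v (P.t k) (P.t (k + 1))

variable [PartialOrder M] [IsOrderedAddMonoid M] [PosSMulMono ℝ M] {v w : ℝ → ℝ → M}

lemma riemannSum_mono (hvw : ∀ s u, 0 ≤ s → s < u → u ≤ 1 → v s u ≤ w s u) :
    P.riemannSum v ≤ P.riemannSum w :=
  sum_le_sum fun k hk => by
    have hk : k < P.n := mem_range.1 hk
    exact smul_le_smul_of_nonneg_left
      (hvw _ _ (P.t_mem_Icc hk.le).1 (P.mono k hk) (P.t_mem_Icc hk).2)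
      (sub_nonneg.2 (P.mono k hk).le)

lemma riemannSum_le_of_pts_subset
    (hv : ∀ s s' u' u, 0 ≤ s → s ≤ s' → s' < u' → u' ≤ u → u ≤ 1 → v s u ≤ v s' u')
    (hPP' : P.pts ⊆ P'.pts) : P.riemannSum v ≤ P'.riemannSum v := by
  obtain ⟨J, hJ, hJ0, hJn, hJt⟩ := exists_reindex_of_pts_subset hPP'
  have hcell : ∀ k < P.n, ∀ j ∈ Ico (J k) (J (k + 1)),
      P.t k ≤ P'.t j ∧ P'.t j < P'.t (j + 1) ∧ P'.t (j + 1) ≤ P.t (k + 1) := by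
    intro k hk j hj
    obtain ⟨hkj, hjk⟩ := mem_Ico.1 hj
    have hj : j + 1 ≤ P'.n := hjk.trans_le (hJt (k + 1) hk).1
    rw [← (hJt k hk.le).2, ← (hJt (k + 1) hk).2]
    exact ⟨P'.monotoneOn_t (hJt k hk.le).1 (Set.mem_Iic.2 (j.le_succ.trans hj)) hkj,
      P'.mono j hj, P'.monotoneOn_t (Set.mem_Iic.2 hj) (hJt (k + 1) hk).1 hjk⟩
  calc P.riemannSum v
      = ∑ k ∈ range P.n, ∑ j ∈ Ico (J k) (J (k + 1)),
          (P'.t (j + 1) - P'.t j) • v (P.t k) (P.t (k + 1)) := by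
        refine sum_congr rfl fun k hk => ?_
        have hk : k < P.n := mem_range.1 hk
        rw [← sum_smul, sum_Ico_sub P'.t (hJ (Set.mem_Iic.2 hk.le) (Set.mem_Iic.2 hk) k.le_succ),
          (hJt k hk.le).2, (hJt (k + 1) hk).2]
    _ ≤ ∑ k ∈ range P.n, ∑ j ∈ Ico (J k) (J (k + 1)),
          (P'.t (j + 1) - P'.t j) • v (P'.t j) (P'.t (j + 1)) := by
        refine sum_le_sum fun k hk => sum_le_sum fun j hj => ?_
        have hk : k < P.n := mem_range.1 hk
        obtain ⟨hkj, hj, hjk⟩ := hcell k hk j hj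
        exact smul_le_smul_of_nonneg_left
          (hv _ _ _ _ (P.t_mem_Icc hk.le).1 hkj hj hjk (P.t_mem_Icc hk).2) (sub_nonneg.2 hj.le)
    _ = P'.riemannSum v := by
        rw [sum_range_sum_Ico_of_monotoneOn _ hJ, hJ0, hJn, ← range_eq_Ico, riemannSum]

end RiemannSum

end Partition

section CellSums

variable {A B : IR} {F : IR → IR} {s s' u' u : ℝ}

lemma dM_nonneg (A B : IR) : 0 ≤ dM A B := le_max_of_le_left (abs_nonneg _)

lemma sum_dM_smul_eq_smul_riemannSum {M : Type*} [AddCommMonoid M] [Module ℝ M] (hAB : A ≤ B)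
    (P : Partition) (w : ℝ → ℝ → M) :
    ∑ k ∈ range P.n, dM (seg A B (P.t k)) (seg A B (P.t (k + 1))) • w (P.t k) (P.t (k + 1)) =
      dM A B • P.riemannSum w := by
  rw [Partition.riemannSum, smul_sum]
  refine sum_congr rfl fun k hk => ?_
  have hk : k < P.n := mem_range.1 hk
  rw [dM_seg_seg hAB (P.t_mem_Icc hk.le) (P.t_mem_Icc hk) (P.mono k hk).le, smul_smul, mul_comm]

lemma lowerSum_eq_smul_riemannSum (hAB : A ≤ B) (P : Partition) :
    lowerSum A B F P =
      dM A B • P.riemannSum fun s u => infS (F '' box (seg A B s) (seg A B u)) :=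
  sum_dM_smul_eq_smul_riemannSum hAB P fun s u => infS (F '' box (seg A B s) (seg A B u))

lemma upperSum_eq_smul_riemannSum (hAB : A ≤ B) (P : Partition) :
    upperSum A B F P =
      dM A B • P.riemannSum fun s u => supS (F '' box (seg A B s) (seg A B u)) :=
  sum_dM_smul_eq_smul_riemannSum hAB P fun s u => supS (F '' box (seg A B s) (seg A B u))

lemma infS_image_box_seg_le (hAB : A ≤ B) (hF : BddBelow (F '' box A B)) (hs : 0 ≤ s)
    (hss' : s ≤ s') (hs'u' : s' ≤ u') (hu'u : u' ≤ u) (hu : u ≤ 1) :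
    infS (F '' box (seg A B s) (seg A B u)) ≤ infS (F '' box (seg A B s') (seg A B u')) :=
  infS_le_infS (hF.mono (Set.image_mono (box_seg_subset_box hAB hs (by linarith) hu)))
    ((box_seg_nonempty hAB (hs.trans hss') hs'u' (hu'u.trans hu)).image F)
    (Set.image_mono (box_seg_subset_box_seg hAB hs hss' hs'u' hu'u hu))

lemma supS_image_box_seg_le (hAB : A ≤ B) (hF : BddAbove (F '' box A B)) (hs : 0 ≤ s)
    (hss' : s ≤ s') (hs'u' : s' ≤ u') (hu'u : u' ≤ u) (hu : u ≤ 1) :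
    supS (F '' box (seg A B s') (seg A B u')) ≤ supS (F '' box (seg A B s) (seg A B u)) :=
  supS_le_supS (hF.mono (Set.image_mono (box_seg_subset_box hAB hs (by linarith) hu)))
    ((box_seg_nonempty hAB (hs.trans hss') hs'u' (hu'u.trans hu)).image F)
    (Set.image_mono (box_seg_subset_box_seg hAB hs hss' hs'u' hu'u hu))

lemma infS_image_box_seg_le_supS (hAB : A ≤ B) (hF : BoundedOn F A B) (hs : 0 ≤ s)
    (hsu : s ≤ u) (hu : u ≤ 1) :
    infS (F '' box (seg A B s) (seg A B u)) ≤ supS (F '' box (seg A B s) (seg A B u)) :=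
  infS_le_supS ((box_seg_nonempty hAB hs hsu hu).image F)
    (hF.bddBelow.mono (Set.image_mono (box_seg_subset_box hAB hs hsu hu)))
    (hF.bddAbove.mono (Set.image_mono (box_seg_subset_box hAB hs hsu hu)))

end CellSums

end IR

open IR in
/-- Let `A ≪ B`, `F : 𝕀_{[A,B]} → 𝕀ℝ` bounded, and `𝒫', 𝒫` partitions of
`𝕀_{[A,B]}`.  If `𝒫'` is finer than `𝒫` (`𝒫' ⪯ 𝒫`, i.e. `𝒫 ⊆ 𝒫'` as sets of
points), then `σ(F,𝒫) ≤ σ(F,𝒫') ≤ Σ(F,𝒫') ≤ Σ(F,𝒫)`. -/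
theorem IR.refine_sums (A B : IR) (h : sll A B) (F : IR → IR)
    (hF : BoundedOn F A B) (P' P : Partition)
    (hfine : Partition.ipts A B P ⊆ Partition.ipts A B P') :
    lowerSum A B F P ≤ lowerSum A B F P' ∧
    lowerSum A B F P' ≤ upperSum A B F P' ∧
    upperSum A B F P' ≤ upperSum A B F P := by
  have hAB : A ≤ B := ⟨h.1.le, h.2.le⟩
  have hPP' := Partition.pts_subset_of_ipts_subset h.1 hfine
  simp only [lowerSum_eq_smul_riemannSum hAB, upperSum_eq_smul_riemannSum hAB]
  refine ⟨?_, ?_, ?_⟩ <;> refine smul_le_smul_of_nonneg_left ?_ (dM_nonneg A B)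
  · exact Partition.riemannSum_le_of_pts_subset
      (fun _ _ _ _ hs hss' hs'u' hu'u hu =>
        infS_image_box_seg_le hAB hF.bddBelow hs hss' hs'u'.le hu'u hu) hPP'
  · exact P'.riemannSum_mono fun _ _ hs hsu hu =>
      infS_image_box_seg_le_supS hAB hF hs hsu.le hu
  -- the upper sums are the lower-type sums of `supS` in the dual order
  · exact Partition.riemannSum_le_of_pts_subset (M := (ℝ × ℝ)ᵒᵈ)
      (fun _ _ _ _ hs hss' hs'u' hu'u hu =>
        supS_image_box_seg_le hAB hF.bddAbove hs hss' hs'u'.le hu'u hu) hPP'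
end

section
/- Let A ≪ B in 𝕀ℝ, let F : 𝕀_{[A,B]} → 𝕀ℝ be a bounded interval function, and let 𝒫 and 𝒬 be any two partitions of 𝕀_{[A,B]}. Then σ(F,𝒫) ≤ Σ(F,𝒬) in the Kulisch–Miranker order. -/
theorem clamp_id (u v a b : ℝ) (huv : u ≤ v) (hab : a ≤ b) :
    max 0 (min v b - max u a) = max u (min v b) - max u (min v a) := by
  rcases le_total b u with h1 | h1 <;> rcases le_total a v with h2 | h2 <;>
    simp [max_def, min_def] <;> split_ifs <;> linarith

theorem darboux (n m : ℕ) (t s : ℕ → ℝ) (a b : ℕ → ℝ) (f : ℝ → ℝ)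
    (ht0 : t 0 = 0) (htn : t n = 1) (hs0 : s 0 = 0) (hsm : s m = 1)
    (ht : ∀ k < n, 0 ≤ t k ∧ t k ≤ t (k+1) ∧ t (k+1) ≤ 1)
    (hs : ∀ l < m, 0 ≤ s l ∧ s l ≤ s (l+1) ∧ s (l+1) ≤ 1)
    (ha : ∀ k < n, ∀ x, t k ≤ x → x ≤ t (k+1) → a k ≤ f x)
    (hb : ∀ l < m, ∀ x, s l ≤ x → x ≤ s (l+1) → f x ≤ b l) :
    ∑ k ∈ Finset.range n, (t (k+1) - t k) * a k ≤
      ∑ l ∈ Finset.range m, (s (l+1) - s l) * b l := by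
  set len : ℕ → ℕ → ℝ := fun k l => max 0 (min (t (k+1)) (s (l+1)) - max (t k) (s l)) with hlen
  have hΔt : ∀ k < n, t (k+1) - t k = ∑ l ∈ Finset.range m, len k l := by
    intro k hk
    obtain ⟨h0, h1, h2⟩ := ht k hk
    have hcong : ∀ l ∈ Finset.range m, len k l =
        max (t k) (min (t (k+1)) (s (l+1))) - max (t k) (min (t (k+1)) (s l)) := by
      intro l hl
      exact clamp_id _ _ _ _ h1 (hs l (Finset.mem_range.mp hl)).2.1
    rw [Finset.sum_congr rfl hcong,
      Finset.sum_range_sub (fun l => max (t k) (min (t (k+1)) (s l))) m]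
    rw [hsm, hs0, min_eq_left h2, max_eq_right h1, min_eq_right (le_trans h0 h1), max_eq_left h0]
  have hΔs : ∀ l < m, s (l+1) - s l = ∑ k ∈ Finset.range n, len k l := by
    intro l hl
    obtain ⟨h0, h1, h2⟩ := hs l hl
    have hcong : ∀ k ∈ Finset.range n, len k l =
        max (s l) (min (s (l+1)) (t (k+1))) - max (s l) (min (s (l+1)) (t k)) := by
      intro k hk
      have hkk := (ht k (Finset.mem_range.mp hk)).2.1
      simp only [hlen]
      rw [min_comm (t (k+1)) (s (l+1)), max_comm (t k) (s l)]
      exact clamp_id _ _ _ _ h1 hkk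
    rw [Finset.sum_congr rfl hcong,
      Finset.sum_range_sub (fun k => max (s l) (min (s (l+1)) (t k))) n]
    rw [htn, ht0, min_eq_left h2, max_eq_right h1, min_eq_right (le_trans h0 h1), max_eq_left h0]
  calc ∑ k ∈ Finset.range n, (t (k+1) - t k) * a k
      = ∑ k ∈ Finset.range n, ∑ l ∈ Finset.range m, len k l * a k := by
        refine Finset.sum_congr rfl fun k hk => ?_
        rw [hΔt k (Finset.mem_range.mp hk), Finset.sum_mul]
    _ ≤ ∑ k ∈ Finset.range n, ∑ l ∈ Finset.range m, len k l * b l := by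
        refine Finset.sum_le_sum fun k hk => Finset.sum_le_sum fun l hl => ?_
        rw [Finset.mem_range] at hk hl
        have h0l : (0:ℝ) ≤ len k l := le_max_left _ _
        rcases h0l.lt_or_eq with hpos | hzero
        · set x := (max (t k) (s l) + min (t (k+1)) (s (l+1))) / 2 with hx
          have hlt : max (t k) (s l) < min (t (k+1)) (s (l+1)) := by
            by_contra hc
            push_neg at hc
            have : len k l = 0 := max_eq_left (by linarith)
            linarith
          have hx1 : max (t k) (s l) ≤ x := by rw [hx]; linarith
          have hx2 : x ≤ min (t (k+1)) (s (l+1)) := by rw [hx]; linarith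
          have hfx1 : a k ≤ f x := ha k hk x (le_trans (le_max_left _ _) hx1)
            (le_trans hx2 (min_le_left _ _))
          have hfx2 : f x ≤ b l := hb l hl x (le_trans (le_max_right _ _) hx1)
            (le_trans hx2 (min_le_right _ _))
          exact mul_le_mul_of_nonneg_left (le_trans hfx1 hfx2) (le_of_lt hpos)
        · rw [← hzero]; simp
    _ = ∑ l ∈ Finset.range m, ∑ k ∈ Finset.range n, len k l * b l := Finset.sum_comm
    _ = ∑ l ∈ Finset.range m, (s (l+1) - s l) * b l := by
        refine Finset.sum_congr rfl fun l hl => ?_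
        rw [hΔs l (Finset.mem_range.mp hl), Finset.sum_mul]

namespace IR

theorem le_def' {X Y : IR} : X ≤ Y ↔ lo X ≤ lo Y ∧ hi X ≤ hi Y := Iff.rfl

theorem seg_cond (A B : IR) {t : ℝ} (h0 : 0 ≤ t) (h1 : t ≤ 1) :
    lo A + t * (lo B - lo A) ≤ hi A + t * (hi B - hi A) := by
  have hA : lo A ≤ hi A := A.prop
  have hB : lo B ≤ hi B := B.prop
  nlinarith [mul_nonneg h0 (sub_nonneg.2 hB), mul_nonneg (sub_nonneg.2 h1) (sub_nonneg.2 hA)]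

theorem seg_lo (A B : IR) {t : ℝ} (h0 : 0 ≤ t) (h1 : t ≤ 1) :
    lo (seg A B t) = lo A + t * (lo B - lo A) := by
  rw [seg, mkI, dif_pos (seg_cond A B h0 h1)]; rfl

theorem seg_hi (A B : IR) {t : ℝ} (h0 : 0 ≤ t) (h1 : t ≤ 1) :
    hi (seg A B t) = hi A + t * (hi B - hi A) := by
  rw [seg, mkI, dif_pos (seg_cond A B h0 h1)]; rfl

theorem seg_mono (A B : IR) (h : sll A B) {t t' : ℝ} (h0 : 0 ≤ t) (htt : t ≤ t') (h1 : t' ≤ 1) :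
    seg A B t ≤ seg A B t' := by
  have h0' : 0 ≤ t' := le_trans h0 htt
  have h1' : t ≤ 1 := le_trans htt h1
  have hlo : lo B - lo A ≥ 0 := by have := h.1; linarith
  have hhi : hi B - hi A ≥ 0 := by have := h.2; linarith
  rw [le_def', seg_lo A B h0 h1', seg_lo A B h0' h1, seg_hi A B h0 h1', seg_hi A B h0' h1]
  constructor <;> nlinarith [mul_nonneg (sub_nonneg.2 htt) hlo, mul_nonneg (sub_nonneg.2 htt) hhi]

theorem le_seg (A B : IR) (h : sll A B) {t : ℝ} (h0 : 0 ≤ t) (h1 : t ≤ 1) :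
    A ≤ seg A B t := by
  have hlo : lo B - lo A ≥ 0 := by have := h.1; linarith
  have hhi : hi B - hi A ≥ 0 := by have := h.2; linarith
  rw [le_def', seg_lo A B h0 h1, seg_hi A B h0 h1]
  constructor <;> nlinarith [mul_nonneg h0 hlo, mul_nonneg h0 hhi]

theorem seg_le (A B : IR) (h : sll A B) {t : ℝ} (h0 : 0 ≤ t) (h1 : t ≤ 1) :
    seg A B t ≤ B := by
  have hlo : lo B - lo A ≥ 0 := by have := h.1; linarith
  have hhi : hi B - hi A ≥ 0 := by have := h.2; linarith
  rw [le_def', seg_lo A B h0 h1, seg_hi A B h0 h1]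
  constructor <;> nlinarith [mul_nonneg (sub_nonneg.2 h1) hlo, mul_nonneg (sub_nonneg.2 h1) hhi]

theorem dM_seg (A B : IR) (h : sll A B) {t t' : ℝ} (h0 : 0 ≤ t) (htt : t ≤ t') (h1 : t' ≤ 1) :
    dM (seg A B t) (seg A B t') = (t' - t) * max (lo B - lo A) (hi B - hi A) := by
  have h0' : 0 ≤ t' := le_trans h0 htt
  have h1' : t ≤ 1 := le_trans htt h1
  have hlo : (0:ℝ) ≤ lo B - lo A := by have := h.1; linarith
  have hhi : (0:ℝ) ≤ hi B - hi A := by have := h.2; linarith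
  have hd : (0:ℝ) ≤ t' - t := sub_nonneg.2 htt
  rw [dM, seg_lo A B h0 h1', seg_lo A B h0' h1, seg_hi A B h0 h1', seg_hi A B h0' h1]
  have e1 : lo A + t' * (lo B - lo A) - (lo A + t * (lo B - lo A)) = (t' - t) * (lo B - lo A) := by
    ring
  have e2 : hi A + t' * (hi B - hi A) - (hi A + t * (hi B - hi A)) = (t' - t) * (hi B - hi A) := by
    ring
  rw [e1, e2, abs_of_nonneg (mul_nonneg hd hlo), abs_of_nonneg (mul_nonneg hd hhi)]
  rcases le_total (lo B - lo A) (hi B - hi A) with hc | hc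
  · rw [max_eq_right hc, max_eq_right (mul_le_mul_of_nonneg_left hc hd)]
  · rw [max_eq_left hc, max_eq_left (mul_le_mul_of_nonneg_left hc hd)]

theorem Partition.t_le (P : Partition) {i j : ℕ} (hij : i ≤ j) (hj : j ≤ P.n) :
    P.t i ≤ P.t j := by
  induction j with
  | zero => exact le_of_eq (congrArg P.t (Nat.le_zero.mp hij))
  | succ j ih =>
    rcases eq_or_lt_of_le hij with rfl | hlt
    · exact le_rfl
    · exact le_trans (ih (Nat.lt_succ_iff.mp hlt) (by omega))
        (le_of_lt (P.mono j (by omega)))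

theorem Partition.t_nonneg (P : Partition) {i : ℕ} (hi : i ≤ P.n) : 0 ≤ P.t i :=
  P.t0 ▸ P.t_le (Nat.zero_le i) hi

theorem Partition.t_le_one (P : Partition) {i : ℕ} (hi : i ≤ P.n) : P.t i ≤ 1 :=
  P.tn ▸ P.t_le hi le_rfl

theorem comp_le (A B : IR) (h : sll A B) (F : IR → IR) (hF : BoundedOn F A B)
    (P Q : Partition) (g : IR → ℝ) (hg : ∀ X Y : IR, X ≤ Y → g X ≤ g Y) :
    ∑ k ∈ Finset.range P.n, dM (seg A B (P.t k)) (seg A B (P.t (k+1))) *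
      sInf (g '' (F '' box (seg A B (P.t k)) (seg A B (P.t (k+1))))) ≤
    ∑ l ∈ Finset.range Q.n, dM (seg A B (Q.t l)) (seg A B (Q.t (l+1))) *
      sSup (g '' (F '' box (seg A B (Q.t l)) (seg A B (Q.t (l+1))))) := by
  obtain ⟨C, D, hCD⟩ := hF
  set c : ℝ := max (lo B - lo A) (hi B - hi A) with hc
  have hc0 : 0 ≤ c := le_trans (by have := h.1; linarith) (le_max_left _ _)
  -- generic facts about a partition's subbox
  have key : ∀ (R : Partition) (k : ℕ), k < R.n →
      (Set.Nonempty (g '' (F '' box (seg A B (R.t k)) (seg A B (R.t (k+1))))) ∧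
       BddBelow (g '' (F '' box (seg A B (R.t k)) (seg A B (R.t (k+1))))) ∧
       BddAbove (g '' (F '' box (seg A B (R.t k)) (seg A B (R.t (k+1)))))) ∧
      (∀ x, R.t k ≤ x → x ≤ R.t (k+1) →
        g (F (seg A B x)) ∈ g '' (F '' box (seg A B (R.t k)) (seg A B (R.t (k+1))))) := by
    intro R k hk
    have hk1 : k + 1 ≤ R.n := hk
    have hk0 : k ≤ R.n := le_of_lt hk
    have h0k : 0 ≤ R.t k := R.t_nonneg hk0
    have h1k : R.t (k+1) ≤ 1 := R.t_le_one hk1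
    have hmem : ∀ x, R.t k ≤ x → x ≤ R.t (k+1) →
        seg A B x ∈ box (seg A B (R.t k)) (seg A B (R.t (k+1))) := by
      intro x hx1 hx2
      exact ⟨seg_mono A B h h0k hx1 (le_trans hx2 h1k),
        seg_mono A B h (le_trans h0k hx1) hx2 h1k⟩
    have hsub : box (seg A B (R.t k)) (seg A B (R.t (k+1))) ⊆ box A B := by
      intro X hX
      exact ⟨le_trans (le_seg A B h h0k (R.t_le_one hk0)) hX.1,
        le_trans hX.2 (seg_le A B h (R.t_nonneg hk1) h1k)⟩
    refine ⟨⟨⟨g (F (seg A B (R.t k))), ?_⟩, ⟨g C, ?_⟩, ⟨g D, ?_⟩⟩, fun x hx1 hx2 =>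
      Set.mem_image_of_mem g (Set.mem_image_of_mem F (hmem x hx1 hx2))⟩
    · exact Set.mem_image_of_mem g (Set.mem_image_of_mem F
        (hmem (R.t k) le_rfl (le_of_lt (R.mono k hk))))
    · rintro y ⟨z, ⟨X, hX, rfl⟩, rfl⟩
      exact hg _ _ (hCD X (hsub hX)).1
    · rintro y ⟨z, ⟨X, hX, rfl⟩, rfl⟩
      exact hg _ _ (hCD X (hsub hX)).2
  have lhs_eq : ∑ k ∈ Finset.range P.n, dM (seg A B (P.t k)) (seg A B (P.t (k+1))) *
      sInf (g '' (F '' box (seg A B (P.t k)) (seg A B (P.t (k+1))))) =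
      ∑ k ∈ Finset.range P.n, (P.t (k+1) - P.t k) *
        (c * sInf (g '' (F '' box (seg A B (P.t k)) (seg A B (P.t (k+1)))))) := by
    refine Finset.sum_congr rfl fun k hk => ?_
    rw [Finset.mem_range] at hk
    rw [dM_seg A B h (P.t_nonneg (le_of_lt hk)) (le_of_lt (P.mono k hk)) (P.t_le_one hk)]
    ring
  have rhs_eq : ∑ l ∈ Finset.range Q.n, dM (seg A B (Q.t l)) (seg A B (Q.t (l+1))) *
      sSup (g '' (F '' box (seg A B (Q.t l)) (seg A B (Q.t (l+1))))) =
      ∑ l ∈ Finset.range Q.n, (Q.t (l+1) - Q.t l) *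
        (c * sSup (g '' (F '' box (seg A B (Q.t l)) (seg A B (Q.t (l+1)))))) := by
    refine Finset.sum_congr rfl fun l hl => ?_
    rw [Finset.mem_range] at hl
    rw [dM_seg A B h (Q.t_nonneg (le_of_lt hl)) (le_of_lt (Q.mono l hl)) (Q.t_le_one hl)]
    ring
  rw [lhs_eq, rhs_eq]
  refine darboux P.n Q.n P.t Q.t _ _ (fun x => c * g (F (seg A B x)))
    P.t0 P.tn Q.t0 Q.tn
    (fun k hk => ⟨P.t_nonneg (le_of_lt hk), le_of_lt (P.mono k hk), P.t_le_one hk⟩)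
    (fun l hl => ⟨Q.t_nonneg (le_of_lt hl), le_of_lt (Q.mono l hl), Q.t_le_one hl⟩)
    ?_ ?_
  · intro k hk x hx1 hx2
    obtain ⟨⟨hne, hbdd, -⟩, hmem⟩ := key P k hk
    exact mul_le_mul_of_nonneg_left (csInf_le hbdd (hmem x hx1 hx2)) hc0
  · intro l hl x hx1 hx2
    obtain ⟨⟨hne, -, hbdd⟩, hmem⟩ := key Q l hl
    exact mul_le_mul_of_nonneg_left (le_csSup hbdd (hmem x hx1 hx2)) hc0

end IR

open IR in
/-- Let `A ≪ B`, `F : 𝕀_{[A,B]} → 𝕀ℝ` bounded, and `𝒫, 𝒬` any two partitions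
of `𝕀_{[A,B]}`.  Then `σ(F,𝒫) ≤ Σ(F,𝒬)` in the Kulisch–Miranker order. -/
theorem IR.lowerSum_le_upperSum_any (A B : IR) (h : sll A B) (F : IR → IR)
    (hF : BoundedOn F A B) (P Q : Partition) :
    lowerSum A B F P ≤ upperSum A B F Q := by
  rw [Prod.le_def]
  constructor
  · have e1 : (lowerSum A B F P).1 = ∑ k ∈ Finset.range P.n,
        dM (seg A B (P.t k)) (seg A B (P.t (k+1))) *
          sInf (lo '' (F '' box (seg A B (P.t k)) (seg A B (P.t (k+1))))) := by
      simp [lowerSum, Prod.fst_sum, infS, smul_eq_mul]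
    have e2 : (upperSum A B F Q).1 = ∑ l ∈ Finset.range Q.n,
        dM (seg A B (Q.t l)) (seg A B (Q.t (l+1))) *
          sSup (lo '' (F '' box (seg A B (Q.t l)) (seg A B (Q.t (l+1))))) := by
      simp [upperSum, Prod.fst_sum, supS, smul_eq_mul]
    rw [e1, e2]
    exact comp_le A B h F hF P Q lo (fun X Y hXY => (le_def'.mp hXY).1)
  · have e1 : (lowerSum A B F P).2 = ∑ k ∈ Finset.range P.n,
        dM (seg A B (P.t k)) (seg A B (P.t (k+1))) *
          sInf (hi '' (F '' box (seg A B (P.t k)) (seg A B (P.t (k+1))))) := by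
      simp [lowerSum, Prod.snd_sum, infS, smul_eq_mul]
    have e2 : (upperSum A B F Q).2 = ∑ l ∈ Finset.range Q.n,
        dM (seg A B (Q.t l)) (seg A B (Q.t (l+1))) *
          sSup (hi '' (F '' box (seg A B (Q.t l)) (seg A B (Q.t (l+1))))) := by
      simp [upperSum, Prod.snd_sum, supS, smul_eq_mul]
    rw [e1, e2]
    exact comp_le A B h F hF P Q hi (fun X Y hXY => (le_def'.mp hXY).2)
end

section
/- Let a < b be real numbers, A = [a,a] and B = [b,b] the corresponding degenerate intervals, and let F : 𝕀_{[A,B]} → 𝕀ℝ be continuous with respect to the Moore metric d_M (note 𝕀_{[[a,a],[b,b]]} is exactly the set of closed subintervals of [a,b]). Then F is integrable and ∫_{[a,a]}^{[b,b]} F(X)dX = [∫_a^b f_l(x)dx, ∫_a^b f_r(x)dx], where f_l(x) = π₁ F([x,x]) and f_r(x) = π₂ F([x,x]); that is, the interval integral with degenerate limits reduces to the Moore–Yang integral of F over [a,b]. -/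
/-!
For `A = [a,a]`, `B = [b,b]` every partition point `A + t_k (B - A)` is a degenerate interval
`[x_k, x_k]`, consecutive points are at Moore distance `x_{k+1} - x_k`, and the cell
`𝕀_{[P_k, P_{k+1}]}` consists of the subintervals of `[x_k, x_{k+1}]`. So each component of
`σ(F, 𝒫)` and `Σ(F, 𝒫)` is a Darboux-type sum of `φ = π_i ∘ F` whose infimum or supremum on a
cell runs over all its subintervals. Since the cell contains every `[x,x]` with
`x_k ≤ x ≤ x_{k+1}`, these sums bracket `∫_a^b φ[x,x] dx`; and since `φ` is uniformly continuous
on the compact set `𝕀_{[A,B]}`, whose cells have diameter `x_{k+1} - x_k`, they are `ε`-close on a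
fine uniform partition.
-/

namespace IR

abbrev pure (x : ℝ) : IR := ⟨(x, x), le_rfl⟩

lemma box_subset_box_s15 {A A' B B' : IR} (hA : A ≤ A') (hB : B' ≤ B) : box A' B' ⊆ box A B :=
  fun _ hX => ⟨hA.trans hX.1, hX.2.trans hB⟩

lemma isCompact_box (A B : IR) : IsCompact (box A B) := by
  rw [Topology.IsEmbedding.subtypeVal.isCompact_iff]
  have h : Subtype.val '' box A B = Set.Icc A.val B.val ∩ {p : ℝ × ℝ | p.1 ≤ p.2} := by
    ext p
    constructor
    · rintro ⟨X, hX, rfl⟩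
      exact ⟨hX, X.2⟩
    · rintro ⟨hp, hple⟩
      exact ⟨⟨p, hple⟩, hp, rfl⟩
  rw [h]
  exact isCompact_Icc.inter_right (isClosed_le continuous_fst continuous_snd)

lemma pure_mem_box {u v x : ℝ} (hu : u ≤ x) (hv : x ≤ v) : pure x ∈ box (pure u) (pure v) :=
  ⟨⟨hu, hu⟩, ⟨hv, hv⟩⟩

lemma dist_le_of_mem_box {u v : ℝ} {X Y : IR} (hX : X ∈ box (pure u) (pure v))
    (hY : Y ∈ box (pure u) (pure v)) : dist X Y ≤ v - u := by
  obtain ⟨⟨hX₁, hX₂⟩, hX₃, hX₄⟩ := hX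
  obtain ⟨⟨hY₁, hY₂⟩, hY₃, hY₄⟩ := hY
  rw [Subtype.dist_eq, Prod.dist_eq, Real.dist_eq, Real.dist_eq]
  exact max_le (abs_sub_le_iff.2 ⟨by linarith, by linarith⟩)
    (abs_sub_le_iff.2 ⟨by linarith, by linarith⟩)

lemma continuousOn_comp_pure {φ : IR → ℝ} {u v : ℝ}
    (hφ : ContinuousOn φ (box (pure u) (pure v))) :
    ContinuousOn (fun x => φ (pure x)) (Set.Icc u v) :=
  hφ.comp ((continuous_id.prodMk continuous_id).subtype_mk fun _ => le_rfl).continuousOn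
    fun _ hx => pure_mem_box hx.1 hx.2

lemma continuous_lo : Continuous lo := continuous_fst.comp continuous_subtype_val

lemma continuous_hi : Continuous hi := continuous_snd.comp continuous_subtype_val

lemma seg_pure (a b t : ℝ) : seg (pure a) (pure b) t = pure (a + t * (b - a)) := by
  simp [seg, mkI, lo, hi]

lemma dM_pure (u v : ℝ) : dM (pure u) (pure v) = |v - u| := by
  simp [dM, lo, hi]

section Darboux

variable (φ : IR → ℝ) (x : ℕ → ℝ) (n : ℕ)

/-- Unlike a Darboux sum of `fun y => φ (pure y)`, the infimum on a cell `[x k, x (k + 1)]` is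
over `φ` of all its subintervals. -/
noncomputable def lowerDarboux : ℝ :=
  ∑ k ∈ Finset.range n, (x (k + 1) - x k) * sInf (φ '' box (pure (x k)) (pure (x (k + 1))))

noncomputable def upperDarboux : ℝ :=
  ∑ k ∈ Finset.range n, (x (k + 1) - x k) * sSup (φ '' box (pure (x k)) (pure (x (k + 1))))

variable {φ x n}

lemma mul_sInf_le_integral {u v : ℝ} (huv : u ≤ v)
    (hφ : ContinuousOn φ (box (pure u) (pure v))) :
    (v - u) * sInf (φ '' box (pure u) (pure v)) ≤ ∫ y in u..v, φ (pure y) := by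
  have hbdd := ((isCompact_box _ _).image_of_continuousOn hφ).bddBelow
  calc (v - u) * sInf (φ '' box (pure u) (pure v))
      = ∫ _ in u..v, sInf (φ '' box (pure u) (pure v)) := by simp
    _ ≤ ∫ y in u..v, φ (pure y) :=
      intervalIntegral.integral_mono_on huv intervalIntegrable_const
        ((continuousOn_comp_pure hφ).intervalIntegrable_of_Icc huv)
        fun y hy => csInf_le hbdd ⟨pure y, pure_mem_box hy.1 hy.2, rfl⟩

lemma integral_le_mul_sSup {u v : ℝ} (huv : u ≤ v)
    (hφ : ContinuousOn φ (box (pure u) (pure v))) :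
    ∫ y in u..v, φ (pure y) ≤ (v - u) * sSup (φ '' box (pure u) (pure v)) := by
  have hbdd := ((isCompact_box _ _).image_of_continuousOn hφ).bddAbove
  calc ∫ y in u..v, φ (pure y)
      ≤ ∫ _ in u..v, sSup (φ '' box (pure u) (pure v)) :=
      intervalIntegral.integral_mono_on huv
        ((continuousOn_comp_pure hφ).intervalIntegrable_of_Icc huv) intervalIntegrable_const
        fun y hy => le_csSup hbdd ⟨pure y, pure_mem_box hy.1 hy.2, rfl⟩
    _ = (v - u) * sSup (φ '' box (pure u) (pure v)) := by simp

lemma lowerDarboux_le_integral (hx : ∀ k < n, x k ≤ x (k + 1))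
    (hφ : ∀ k < n, ContinuousOn φ (box (pure (x k)) (pure (x (k + 1))))) :
    lowerDarboux φ x n ≤ ∫ y in x 0..x n, φ (pure y) := by
  rw [← intervalIntegral.sum_integral_adjacent_intervals fun k hk =>
    (continuousOn_comp_pure (hφ k hk)).intervalIntegrable_of_Icc (hx k hk)]
  exact Finset.sum_le_sum fun k hk =>
    mul_sInf_le_integral (hx k (Finset.mem_range.1 hk)) (hφ k (Finset.mem_range.1 hk))

lemma integral_le_upperDarboux (hx : ∀ k < n, x k ≤ x (k + 1))
    (hφ : ∀ k < n, ContinuousOn φ (box (pure (x k)) (pure (x (k + 1))))) :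
    ∫ y in x 0..x n, φ (pure y) ≤ upperDarboux φ x n := by
  rw [← intervalIntegral.sum_integral_adjacent_intervals fun k hk =>
    (continuousOn_comp_pure (hφ k hk)).intervalIntegrable_of_Icc (hx k hk)]
  exact Finset.sum_le_sum fun k hk =>
    integral_le_mul_sSup (hx k (Finset.mem_range.1 hk)) (hφ k (Finset.mem_range.1 hk))

lemma upperDarboux_sub_lowerDarboux_le {η : ℝ} (hx : ∀ k < n, x k ≤ x (k + 1))
    (hosc : ∀ k < n, sSup (φ '' box (pure (x k)) (pure (x (k + 1))))
      ≤ sInf (φ '' box (pure (x k)) (pure (x (k + 1)))) + η) :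
    upperDarboux φ x n - lowerDarboux φ x n ≤ (x n - x 0) * η := by
  rw [upperDarboux, lowerDarboux, ← Finset.sum_sub_distrib, ← Finset.sum_range_sub,
    Finset.sum_mul]
  refine Finset.sum_le_sum fun k hk => ?_
  rw [← mul_sub]
  have := hosc k (Finset.mem_range.1 hk)
  exact mul_le_mul_of_nonneg_left (by linarith) (sub_nonneg.2 (hx k (Finset.mem_range.1 hk)))

end Darboux

lemma sSup_image_le_sInf_image_add {α : Type*} {f : α → ℝ} {s : Set α} {η : ℝ}
    (hs : s.Nonempty) (h : ∀ X ∈ s, ∀ Y ∈ s, f X ≤ f Y + η) :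
    sSup (f '' s) ≤ sInf (f '' s) + η := by
  refine csSup_le (hs.image f) ?_
  rintro _ ⟨X, hX, rfl⟩
  rw [← sub_le_iff_le_add]
  refine le_csInf (hs.image f) ?_
  rintro _ ⟨Y, hY, rfl⟩
  linarith [h X hX Y hY]

lemma exists_forall_sSup_le_sInf_add {φ : IR → ℝ} {a b : ℝ}
    (hφ : ContinuousOn φ (box (pure a) (pure b))) {η : ℝ} (hη : 0 < η) :
    ∃ δ > 0, ∀ u v, a ≤ u → u ≤ v → v ≤ b → v - u < δ →
      sSup (φ '' box (pure u) (pure v)) ≤ sInf (φ '' box (pure u) (pure v)) + η := by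
  obtain ⟨δ, hδ, hφδ⟩ := Metric.uniformContinuousOn_iff.1
    ((isCompact_box _ _).uniformContinuousOn_of_continuous hφ) η hη
  refine ⟨δ, hδ, fun u v hau huv hvb hδuv => ?_⟩
  have hsub : box (pure u) (pure v) ⊆ box (pure a) (pure b) :=
    box_subset_box_s15 ⟨hau, hau⟩ ⟨hvb, hvb⟩
  refine sSup_image_le_sInf_image_add ⟨pure u, pure_mem_box le_rfl huv⟩ fun X hX Y hY => ?_
  have := hφδ X (hsub hX) Y (hsub hY) ((dist_le_of_mem_box hX hY).trans_lt hδuv)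
  rw [Real.dist_eq] at this
  linarith [le_abs_self (φ X - φ Y)]

section Partition

variable {a b : ℝ} (P : Partition)

noncomputable def Partition.point (a b : ℝ) (k : ℕ) : ℝ := a + P.t k * (b - a)

lemma Partition.t_mem_Icc_s15 {k : ℕ} (hk : k ≤ P.n) : P.t k ∈ Set.Icc 0 1 := by
  have hmono : MonotoneOn P.t (Set.Iic P.n) :=
    monotoneOn_of_le_add_one Set.ordConnected_Iic fun i _ _ hi => (P.mono i hi).le
  have h0 : (0 : ℕ) ∈ Set.Iic P.n := Nat.zero_le _
  exact ⟨P.t0 ▸ hmono h0 hk (Nat.zero_le k), P.tn ▸ hmono hk (Set.mem_Iic.2 le_rfl) hk⟩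

lemma Partition.seg_pure_t (k : ℕ) : seg (pure a) (pure b) (P.t k) = pure (P.point a b k) :=
  seg_pure a b (P.t k)

lemma Partition.point_zero : P.point a b 0 = a := by simp [Partition.point, P.t0]

lemma Partition.point_n : P.point a b P.n = b := by simp [Partition.point, P.tn]

lemma Partition.point_mem_Icc (hab : a ≤ b) {k : ℕ} (hk : k ≤ P.n) :
    P.point a b k ∈ Set.Icc a b := by
  obtain ⟨h0, h1⟩ := P.t_mem_Icc_s15 hk
  constructor <;> simp only [Partition.point] <;> nlinarith

lemma Partition.point_le_point_succ (hab : a ≤ b) {k : ℕ} (hk : k < P.n) :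
    P.point a b k ≤ P.point a b (k + 1) := by
  have := P.mono k hk
  simp only [Partition.point]
  nlinarith

lemma Partition.continuousOn_cell {φ : IR → ℝ} (hab : a ≤ b)
    (hφ : ContinuousOn φ (box (pure a) (pure b))) {k : ℕ} (hk : k < P.n) :
    ContinuousOn φ (box (pure (P.point a b k)) (pure (P.point a b (k + 1)))) := by
  obtain ⟨hak, -⟩ := P.point_mem_Icc hab hk.le
  obtain ⟨-, hkb⟩ := P.point_mem_Icc hab (Nat.succ_le_of_lt hk)
  exact hφ.mono (box_subset_box_s15 ⟨hak, hak⟩ ⟨hkb, hkb⟩)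

noncomputable def Partition.uniform (N : ℕ) (hN : 0 < N) : Partition where
  n := N
  npos := hN
  t i := i / N
  t0 := by simp
  tn := by field_simp
  mono i _ := by gcongr; exact lt_add_one _

lemma Partition.uniform_point_succ_sub {N : ℕ} (hN : 0 < N) (k : ℕ) :
    (uniform N hN).point a b (k + 1) - (uniform N hN).point a b k = (b - a) / N := by
  simp only [Partition.point, Partition.uniform]
  push_cast
  ring

instance : Nonempty Partition := ⟨Partition.uniform 1 one_pos⟩

end Partition

section DarbouxPartition

variable {φ : IR → ℝ} {a b : ℝ}

lemma Partition.lowerDarboux_le_integral (hab : a ≤ b)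
    (hφ : ContinuousOn φ (box (pure a) (pure b))) (P : Partition) :
    lowerDarboux φ (P.point a b) P.n ≤ ∫ x in a..b, φ (pure x) := by
  simpa only [P.point_zero, P.point_n] using IR.lowerDarboux_le_integral (x := P.point a b)
    (fun k hk => P.point_le_point_succ hab hk) (fun k hk => P.continuousOn_cell hab hφ hk)

lemma Partition.integral_le_upperDarboux (hab : a ≤ b)
    (hφ : ContinuousOn φ (box (pure a) (pure b))) (P : Partition) :
    ∫ x in a..b, φ (pure x) ≤ upperDarboux φ (P.point a b) P.n := by
  simpa only [P.point_zero, P.point_n] using IR.integral_le_upperDarboux (x := P.point a b)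
    (fun k hk => P.point_le_point_succ hab hk) (fun k hk => P.continuousOn_cell hab hφ hk)

lemma exists_partition_upperDarboux_le_lowerDarboux_add (hab : a ≤ b)
    (hφ : ContinuousOn φ (box (pure a) (pure b))) {ε : ℝ} (hε : 0 < ε) :
    ∃ P : Partition,
      upperDarboux φ (P.point a b) P.n ≤ lowerDarboux φ (P.point a b) P.n + ε := by
  have hη : 0 < ε / (b - a + 1) := div_pos hε (by linarith)
  obtain ⟨δ, hδ, hosc⟩ := exists_forall_sSup_le_sInf_add hφ hη
  obtain ⟨N, hN⟩ := exists_nat_gt ((b - a) / δ)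
  have hNpos : 0 < N := by
    have : (0 : ℝ) < N := lt_of_le_of_lt (div_nonneg (sub_nonneg.2 hab) hδ.le) hN
    exact_mod_cast this
  set P := Partition.uniform N hNpos
  have hmesh : (b - a) / N < δ := by
    rw [div_lt_iff₀ hδ] at hN
    rw [div_lt_iff₀ (by exact_mod_cast hNpos)]
    linarith
  have hgap := upperDarboux_sub_lowerDarboux_le (x := P.point a b)
    (fun k hk => P.point_le_point_succ hab hk) fun k hk =>
      hosc (P.point a b k) (P.point a b (k + 1)) (P.point_mem_Icc hab hk.le).1
        (P.point_le_point_succ hab hk) (P.point_mem_Icc hab (Nat.succ_le_of_lt hk)).2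
        (by rw [Partition.uniform_point_succ_sub]; exact hmesh)
  rw [P.point_zero, P.point_n] at hgap
  have hfrac : (b - a) * (ε / (b - a + 1)) ≤ ε := by
    rw [mul_div_assoc', div_le_iff₀ (by linarith)]
    nlinarith
  exact ⟨P, by linarith⟩

end DarbouxPartition

lemma csSup_range_eq_and_csInf_range_eq_of_forall_le_add {ι : Type*} [Nonempty ι]
    {L U : ι → ℝ} {I : ℝ} (hL : ∀ i, L i ≤ I) (hU : ∀ i, I ≤ U i)
    (h : ∀ ε > 0, ∃ i, U i ≤ L i + ε) : sSup (Set.range L) = I ∧ sInf (Set.range U) = I := by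
  have hbddL : BddAbove (Set.range L) := ⟨I, Set.forall_mem_range.2 hL⟩
  have hbddU : BddBelow (Set.range U) := ⟨I, Set.forall_mem_range.2 hU⟩
  constructor
  · refine le_antisymm (csSup_le (Set.range_nonempty L) (Set.forall_mem_range.2 hL))
      (le_of_forall_pos_le_add fun ε hε => ?_)
    obtain ⟨i, hi⟩ := h ε hε
    linarith [hU i, le_csSup hbddL (Set.mem_range_self i)]
  · refine le_antisymm (le_of_forall_pos_le_add fun ε hε => ?_)
      (le_csInf (Set.range_nonempty U) (Set.forall_mem_range.2 hU))
    obtain ⟨i, hi⟩ := h ε hε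
    linarith [hL i, csInf_le hbddU (Set.mem_range_self i)]

lemma sSup_lowerDarboux_and_sInf_upperDarboux_eq_integral {φ : IR → ℝ} {a b : ℝ} (hab : a ≤ b)
    (hφ : ContinuousOn φ (box (pure a) (pure b))) :
    sSup (Set.range fun P : Partition => lowerDarboux φ (P.point a b) P.n) =
        ∫ x in a..b, φ (pure x) ∧
      sInf (Set.range fun P : Partition => upperDarboux φ (P.point a b) P.n) =
        ∫ x in a..b, φ (pure x) :=
  csSup_range_eq_and_csInf_range_eq_of_forall_le_add (·.lowerDarboux_le_integral hab hφ)
    (·.integral_le_upperDarboux hab hφ)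
    fun _ hε => exists_partition_upperDarboux_le_lowerDarboux_add hab hφ hε

lemma Partition.sum_dM_smul_eq {a b : ℝ} (hab : a ≤ b) (P : Partition) (G : Set IR → ℝ × ℝ) :
    ∑ k ∈ Finset.range P.n,
        dM (seg (pure a) (pure b) (P.t k)) (seg (pure a) (pure b) (P.t (k + 1))) •
          G (box (seg (pure a) (pure b) (P.t k)) (seg (pure a) (pure b) (P.t (k + 1)))) =
      ∑ k ∈ Finset.range P.n, (P.point a b (k + 1) - P.point a b k) •
        G (box (pure (P.point a b k)) (pure (P.point a b (k + 1)))) := by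
  refine Finset.sum_congr rfl fun k hk => ?_
  rw [P.seg_pure_t, P.seg_pure_t, dM_pure, abs_of_nonneg
    (sub_nonneg.2 (P.point_le_point_succ hab (Finset.mem_range.1 hk)))]

lemma lowerSum_pure {a b : ℝ} (hab : a ≤ b) (F : IR → IR) (P : Partition) :
    lowerSum (pure a) (pure b) F P = (lowerDarboux (fun X => lo (F X)) (P.point a b) P.n,
      lowerDarboux (fun X => hi (F X)) (P.point a b) P.n) := by
  rw [lowerSum, P.sum_dM_smul_eq hab fun S => infS (F '' S)]
  ext <;> simp [Prod.fst_sum, Prod.snd_sum, lowerDarboux, infS, Set.image_image]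

lemma upperSum_pure {a b : ℝ} (hab : a ≤ b) (F : IR → IR) (P : Partition) :
    upperSum (pure a) (pure b) F P = (upperDarboux (fun X => lo (F X)) (P.point a b) P.n,
      upperDarboux (fun X => hi (F X)) (P.point a b) P.n) := by
  rw [upperSum, P.sum_dM_smul_eq hab fun S => supS (F '' S)]
  ext <;> simp [Prod.fst_sum, Prod.snd_sum, upperDarboux, supS, Set.image_image]

end IR

open IR in
/-- Let `a < b`, and let `A = [a,a]`, `B = [b,b]` be the corresponding
degenerate intervals (so `𝕀_{[A,B]}` is the set of closed subintervals of
`[a,b]`).  If `F : 𝕀_{[A,B]} → 𝕀ℝ` is continuous w.r.t. the Moore metric, then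
`F` is integrable and
`∫_{[a,a]}^{[b,b]} F = [∫_a^b f_l, ∫_a^b f_r]` where `f_l(x) = π₁F([x,x])` and
`f_r(x) = π₂F([x,x])`; i.e. the interval integral with degenerate limits is
the Moore–Yang integral of `F` over `[a,b]`. -/
theorem IR.degenerate_limits (a b : ℝ) (hab : a < b) (F : IR → IR)
    (hF : ContinuousOn F (box ⟨(a, a), le_rfl⟩ ⟨(b, b), le_rfl⟩)) :
    lowerInt ⟨(a, a), le_rfl⟩ ⟨(b, b), le_rfl⟩ F =
      upperInt ⟨(a, a), le_rfl⟩ ⟨(b, b), le_rfl⟩ F ∧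
    lowerInt ⟨(a, a), le_rfl⟩ ⟨(b, b), le_rfl⟩ F =
      ((∫ x in a..b, lo (F ⟨(x, x), le_rfl⟩)),
       (∫ x in a..b, hi (F ⟨(x, x), le_rfl⟩))) := by
  obtain ⟨hlo_lower, hlo_upper⟩ :=
    sSup_lowerDarboux_and_sInf_upperDarboux_eq_integral hab.le (continuous_lo.comp_continuousOn hF)
  obtain ⟨hhi_lower, hhi_upper⟩ :=
    sSup_lowerDarboux_and_sInf_upperDarboux_eq_integral hab.le (continuous_hi.comp_continuousOn hF)
  simp only [lowerInt, upperInt, lowerSum_pure hab.le, upperSum_pure hab.le]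
  exact ⟨Prod.ext (hlo_lower.trans hlo_upper.symm) (hhi_lower.trans hhi_upper.symm),
    Prod.ext hlo_lower hhi_lower⟩
end
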